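/- arXiv:1406.5213 — 9 statements merged into one kernel-verified Lean document; each statement's English description precedes it below -/
import Mathlib

section
/- Let n = s·L + L₀ with 0 ≤ L₀ ≤ s−1 and L ≥ 1 (so L = ⌊n/s⌋), and let j = L mod k. Then, as rational numbers, c_n = (L² + (k+2)·L + 2k)/(2k) + ((k−2)·j − j²)/(2k). -/
open Finset

/-! Once `b` and `c` are chosen the number of pennies is forced, so `c_n` counts the pairs `(b, c)`
with `s (b + k c) ≤ n`, i.e. `b + k c ≤ L`. For each `c ≤ q := L / k` there are `L + 1 - k c` choices
of `b`; writing `L = k q + j`, these sum to `(q + 1) (k q + 2 j + 2) / 2`, which is the stated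
formula after clearing denominators. -/

def subtypeAddEqEquivLe {α : Type*} (f : α → ℕ) (n : ℕ) :
    {p : ℕ × α // p.1 + f p.2 = n} ≃ {x : α // f x ≤ n} where
  toFun p := ⟨p.1.2, by have := p.2; omega⟩
  invFun x := ⟨(n - f x.1, x.1), by have := x.2; dsimp only; omega⟩
  left_inv := by
    rintro ⟨⟨a, x⟩, h⟩
    ext <;> dsimp only at h ⊢
    omega
  right_inv _ := rfl

theorem card_add_mul_add_mul_eq {s : ℕ} (hs : 0 < s) (k n : ℕ) :
    Nat.card {p : ℕ × ℕ × ℕ // p.1 + s * p.2.1 + k * s * p.2.2 = n}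
      = Nat.card {p : ℕ × ℕ // p.1 + k * p.2 ≤ n / s} := by
  refine Nat.card_congr <| (Equiv.subtypeEquivRight fun p => ?_).trans <|
    (subtypeAddEqEquivLe (fun p : ℕ × ℕ => s * p.1 + k * s * p.2) n).trans <|
    Equiv.subtypeEquivRight fun p => ?_
  · rw [add_assoc]
  · rw [Nat.le_div_iff_mul_le hs]
    ring_nf

theorem card_add_mul_le {k : ℕ} (hk : 0 < k) (L : ℕ) :
    Nat.card {p : ℕ × ℕ // p.1 + k * p.2 ≤ L} = ∑ c ∈ range (L / k + 1), (L + 1 - k * c) := by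
  set S := (range (L + 1) ×ˢ range (L / k + 1)).filter fun p => p.1 + k * p.2 ≤ L
  have hS : ∀ p, p ∈ S ↔ p.1 + k * p.2 ≤ L := by
    rintro ⟨b, c⟩
    simp only [S, mem_filter, mem_product, mem_range, Nat.lt_succ_iff, Nat.le_div_iff_mul_le hk]
    constructor
    · exact fun h => h.2
    · intro h
      refine ⟨⟨by omega, ?_⟩, h⟩
      nlinarith
  rw [Nat.card_congr (Equiv.subtypeEquivRight fun p => (hS p).symm), Nat.card_eq_finsetCard,
    card_filter, sum_product_right]
  refine sum_congr rfl fun c _ => ?_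
  rw [sum_boole, Nat.cast_id, ← card_range (L + 1 - k * c)]
  congr 1
  ext b
  simp only [mem_filter, mem_range]
  omega

theorem two_mul_sum_range_sub_mul (k q j : ℕ) :
    2 * ∑ c ∈ range (q + 1), (k * q + j + 1 - k * c) = (q + 1) * (k * q + 2 * j + 2) := by
  rw [← sum_range_reflect]
  have hterm : ∀ i ∈ range (q + 1), k * q + j + 1 - k * (q + 1 - 1 - i) = k * i + (j + 1) := by
    intro i hi
    rw [mem_range] at hi
    rw [Nat.add_sub_cancel, Nat.mul_sub]
    have : k * i ≤ k * q := Nat.mul_le_mul_left k (by omega)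
    omega
  rw [sum_congr rfl hterm, sum_add_distrib, ← mul_sum, sum_const, card_range, smul_eq_mul,
    mul_add, mul_left_comm, mul_comm 2 (∑ i ∈ range (q + 1), i), sum_range_id_mul_two,
    Nat.add_sub_cancel]
  ring

theorem change_three_coins_formula_general (s k : ℕ) (hs : 2 ≤ s) (hk : 2 ≤ k)
    (n L L₀ : ℕ) (hL₀ : L₀ ≤ s - 1) (hn : n = s * L + L₀)
    (j : ℕ) (hj : j = L % k) :
    (Nat.card {p : ℕ × ℕ × ℕ // p.1 + s * p.2.1 + k * s * p.2.2 = n} : ℚ)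
      = ((L : ℚ) ^ 2 + ((k : ℚ) + 2) * (L : ℚ) + 2 * (k : ℚ)) / (2 * (k : ℚ))
        + (((k : ℚ) - 2) * (j : ℚ) - (j : ℚ) ^ 2) / (2 * (k : ℚ)) := by
  have hnL : n / s = L := by
    rw [hn, Nat.mul_add_div (by omega), Nat.div_eq_of_lt (by omega), add_zero]
  rw [card_add_mul_add_mul_eq (by omega), hnL, card_add_mul_le (by omega)]
  obtain ⟨q, hq⟩ : ∃ q, L / k = q := ⟨_, rfl⟩
  have hLqj : L = k * q + j := by rw [hj, ← hq, Nat.div_add_mod]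
  have hcount := two_mul_sum_range_sub_mul k q j
  rw [hq]
  subst hLqj
  generalize ∑ c ∈ range (q + 1), (k * q + j + 1 - k * c) = N at hcount
  have hk0 : (k : ℚ) ≠ 0 := by exact_mod_cast (by omega : k ≠ 0)
  have hN : (2 : ℚ) * N = (q + 1) * (k * q + 2 * j + 2) := by exact_mod_cast hcount
  field_simp
  push_cast
  linear_combination k * hN

/-- Exact formula for the number of ways to make change of `n = s*L + L₀` cents
using the coin set `{1, s, k*s}` (pennies, `s`-cent coins and `ks`-cent coins),
where `L ≥ 1`, `0 ≤ L₀ ≤ s - 1` and `j = L mod k`. -/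
theorem change_three_coins_formula (s k : ℕ) (hs : 2 ≤ s) (hk : 2 ≤ k)
    (n L L₀ : ℕ) (hL : 1 ≤ L) (hL₀ : L₀ ≤ s - 1) (hn : n = s * L + L₀)
    (j : ℕ) (hj : j = L % k) :
    (Nat.card {p : ℕ × ℕ × ℕ // p.1 + s * p.2.1 + k * s * p.2.2 = n} : ℚ)
      = ((L : ℚ) ^ 2 + ((k : ℚ) + 2) * (L : ℚ) + 2 * (k : ℚ)) / (2 * (k : ℚ))
        + (((k : ℚ) - 2) * (j : ℚ) - (j : ℚ) ^ 2) / (2 * (k : ℚ)) :=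
  change_three_coins_formula_general s k hs hk n L L₀ hL₀ hn j hj
end

section
/- For every natural number n with ⌊n/s⌋ ≥ 1, the following inequalities hold in ℚ: n²/(2ks²) + n/(2s) − k ≤ c_n ≤ n²/(2ks²) + (k+2)·n/(2ks) + (k−2)²/8 + 1. -/
lemma change_card_aux (s k : ℕ) (hs : 0 < s) (hk : 0 < k) (n : ℕ) :
    Nat.card {p : ℕ × ℕ × ℕ // p.1 + s * p.2.1 + k * s * p.2.2 = n}
      = ∑ c ∈ Finset.range (n / s / k + 1), (n / s - k * c + 1) := by
  have e : {p : ℕ × ℕ × ℕ // p.1 + s * p.2.1 + k * s * p.2.2 = n}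
      ≃ ((c : Fin (n / s / k + 1)) × Fin (n / s - k * (c : ℕ) + 1)) :=
    { toFun := fun ⟨⟨a, b, c⟩, h⟩ => by
        have h' : a + s * b + k * s * c = n := h
        refine ⟨⟨c, ?_⟩, ⟨b, ?_⟩⟩
        · rw [Nat.div_div_eq_div_mul]
          have h1 : k * s * c ≤ n := by omega
          have : c * (s * k) ≤ n := by nlinarith [h1]
          exact Nat.lt_succ_of_le ((Nat.le_div_iff_mul_le (by positivity)).2 this)
        · show b < n / s - k * c + 1
          have h1 : (b + k * c) * s ≤ n := by nlinarith [h']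
          have h2 : b + k * c ≤ n / s := (Nat.le_div_iff_mul_le hs).2 h1
          omega,
      invFun := fun ⟨⟨c, hc'⟩, ⟨b, hb'⟩⟩ => by
        refine ⟨(n - s * b - k * s * c, b, c), ?_⟩
        have hc : c ≤ n / s / k := Nat.lt_succ_iff.1 hc'
        have hb : b ≤ n / s - k * c := Nat.lt_succ_iff.1 hb'
        have hkc : k * c ≤ n / s := by
          calc k * c ≤ k * (n / s / k) := Nat.mul_le_mul_left _ hc
          _ ≤ n / s := by rw [Nat.mul_comm]; exact Nat.div_mul_le_self _ _
        have hsum : b + k * c ≤ n / s := by omega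
        have h3 : (b + k * c) * s ≤ n / s * s := Nat.mul_le_mul_right _ hsum
        have hle : s * b + k * s * c ≤ n := by
          nlinarith [Nat.div_mul_le_self n s]
        show n - s * b - k * s * c + s * b + k * s * c = n
        omega,
      left_inv := fun ⟨⟨a, b, c⟩, h⟩ => by
        have h' : a + s * b + k * s * c = n := h
        apply Subtype.ext
        show (n - s * b - k * s * c, b, c) = (a, b, c)
        have : a = n - s * b - k * s * c := by omega
        rw [this],
      right_inv := fun ⟨⟨c, hc'⟩, ⟨b, hb'⟩⟩ => rfl }
  rw [Nat.card_congr e, Nat.card_eq_fintype_card, Fintype.card_sigma]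
  simp only [Fintype.card_fin]
  exact Fin.sum_univ_eq_sum_range (fun c => n / s - k * c + 1) _

lemma change_sum_cast (q m k : ℕ) (h : ∀ c ∈ Finset.range (q+1), k * c ≤ m) :
    ((∑ c ∈ Finset.range (q+1), (m - k*c + 1) : ℕ) : ℚ)
      = ((q:ℚ)+1) * ((m:ℚ)+1) - (k:ℚ) * ((q:ℚ)*((q:ℚ)+1)/2) := by
  have h1 : ((∑ c ∈ Finset.range (q+1), (m - k*c + 1) : ℕ) : ℚ)
      = ∑ c ∈ Finset.range (q+1), ((m:ℚ) + 1 - (k:ℚ)*(c:ℚ)) := by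
    push_cast
    refine Finset.sum_congr rfl fun c hc => ?_
    rw [Nat.cast_sub (h c hc)]
    push_cast; ring
  rw [h1, Finset.sum_sub_distrib, Finset.sum_const, ← Finset.mul_sum]
  have h2 : ((∑ i ∈ Finset.range (q+1), (i:ℚ))) = (q:ℚ)*((q:ℚ)+1)/2 := by
    have := Finset.sum_range_id_mul_two (q+1)
    have h3 : ((∑ i ∈ Finset.range (q+1), (i:ℕ) : ℕ) : ℚ) * 2 = ((q+1)*q : ℕ) := by
      exact_mod_cast congrArg (Nat.cast : ℕ → ℚ) this
    push_cast at h3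
    linarith
  rw [h2]
  simp
  ring

lemma change_bounds_rat (N M Q S K : ℚ) (hS : 2 ≤ S) (hK : 2 ≤ K) (hM1 : 1 ≤ M)
    (hN0 : 0 ≤ N) (hms : S * M ≤ N) (hn2 : N + 1 ≤ S * M + S)
    (hkq : K * Q ≤ M) (hm2 : M + 1 ≤ K * Q + K) :
    N ^ 2 / (2 * K * S ^ 2) + N / (2 * S) - K
        ≤ (Q + 1) * (M + 1) - K * (Q * (Q + 1) / 2) ∧
      (Q + 1) * (M + 1) - K * (Q * (Q + 1) / 2)
        ≤ N ^ 2 / (2 * K * S ^ 2) + (K + 2) * N / (2 * K * S) + (K - 2) ^ 2 / 8 + 1 := by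
  have hS0 : (0:ℚ) < S := by linarith
  have hK0 : (0:ℚ) < K := by linarith
  have hpos : (0:ℚ) < 2 * K * S ^ 2 := by positivity
  have hpos8 : (0:ℚ) < 8 * K * S ^ 2 := by positivity
  constructor
  · have heq : N ^ 2 / (2 * K * S ^ 2) + N / (2 * S) - K
        = (N ^ 2 + N * K * S - 2 * K ^ 2 * S ^ 2) / (2 * K * S ^ 2) := by
      field_simp
    rw [heq, div_le_iff₀ hpos]
    nlinarith [mul_nonneg (mul_nonneg (by positivity : (0:ℚ) ≤ S^2)
        (by linarith : (0:ℚ) ≤ M - K*Q + 1)) (by linarith : (0:ℚ) ≤ K*Q + K - M - 1),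
      mul_nonneg (by linarith : (0:ℚ) ≤ S*(M+1) - N) (by nlinarith : (0:ℚ) ≤ S*(M+1) + N),
      mul_nonneg (by positivity : (0:ℚ) ≤ K*S) (by linarith : (0:ℚ) ≤ S*(M+1) - N)]
  · have heq : N ^ 2 / (2 * K * S ^ 2) + (K + 2) * N / (2 * K * S) + (K - 2) ^ 2 / 8 + 1
        = (4 * N ^ 2 + 4 * (K + 2) * N * S + K * S ^ 2 * ((K - 2) ^ 2 + 8)) / (8 * K * S ^ 2) := by
      field_simp; ring
    rw [heq, le_div_iff₀ hpos8]
    nlinarith [mul_nonneg (by positivity : (0:ℚ) ≤ S^2) (sq_nonneg (2*(M - K*Q) - (K-2))),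
      mul_nonneg (mul_nonneg (by positivity : (0:ℚ) ≤ S^2) (by linarith : (0:ℚ) ≤ K-1)) (sq_nonneg (K-2)),
      mul_nonneg (by linarith : (0:ℚ) ≤ N - S*M) (by nlinarith : (0:ℚ) ≤ N + S*M),
      mul_nonneg (mul_nonneg (by linarith : (0:ℚ) ≤ K+2) hS0.le) (by linarith : (0:ℚ) ≤ N - S*M)]

/-- Bounds on the number of ways to make change of `n` cents using the coin set
`{1, s, k*s}`, valid whenever `⌊n/s⌋ ≥ 1`. -/
theorem change_three_coins_bounds (s k : ℕ) (hs : 2 ≤ s) (hk : 2 ≤ k)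
    (n : ℕ) (hn : 1 ≤ n / s) :
    (n : ℚ) ^ 2 / (2 * (k : ℚ) * (s : ℚ) ^ 2) + (n : ℚ) / (2 * (s : ℚ)) - (k : ℚ)
        ≤ (Nat.card {p : ℕ × ℕ × ℕ // p.1 + s * p.2.1 + k * s * p.2.2 = n} : ℚ) ∧
      (Nat.card {p : ℕ × ℕ × ℕ // p.1 + s * p.2.1 + k * s * p.2.2 = n} : ℚ)
        ≤ (n : ℚ) ^ 2 / (2 * (k : ℚ) * (s : ℚ) ^ 2)
            + ((k : ℚ) + 2) * (n : ℚ) / (2 * (k : ℚ) * (s : ℚ))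
            + ((k : ℚ) - 2) ^ 2 / 8 + 1 := by
  have hs0 : 0 < s := by omega
  have hk0 : 0 < k := by omega
  set m := n / s with hm
  set q := n / s / k with hq
  have hcard := change_card_aux s k hs0 hk0 n
  have hbound : ∀ c ∈ Finset.range (q+1), k * c ≤ m := by
    intro c hc
    have hc' : c ≤ q := Nat.lt_succ_iff.1 (Finset.mem_range.1 hc)
    calc k * c ≤ k * q := Nat.mul_le_mul_left _ hc'
    _ ≤ m := by rw [hq, Nat.mul_comm]; exact Nat.div_mul_le_self _ _
  have hcast : (Nat.card {p : ℕ × ℕ × ℕ // p.1 + s * p.2.1 + k * s * p.2.2 = n} : ℚ)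
      = ((q:ℚ)+1) * ((m:ℚ)+1) - (k:ℚ) * ((q:ℚ)*((q:ℚ)+1)/2) := by
    rw [hcard]; exact change_sum_cast q m k hbound
  -- natural number facts
  have hms_n : s * m ≤ n := by rw [hm, Nat.mul_comm]; exact Nat.div_mul_le_self _ _
  have hn2_n : n < (m + 1) * s := (Nat.div_lt_iff_lt_mul hs0).1 (Nat.lt_succ_self m)
  have hkq_n : k * q ≤ m := by rw [hq, Nat.mul_comm]; exact Nat.div_mul_le_self _ _
  have hm2_n : m < (q + 1) * k := (Nat.div_lt_iff_lt_mul hk0).1 (Nat.lt_succ_self q)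
  have hms : (s:ℚ) * (m:ℚ) ≤ (n:ℚ) := by exact_mod_cast hms_n
  have hn2 : (n:ℚ) + 1 ≤ (s:ℚ) * (m:ℚ) + (s:ℚ) := by
    have : n + 1 ≤ s * m + s := by nlinarith [hn2_n]
    exact_mod_cast this
  have hkq : (k:ℚ) * (q:ℚ) ≤ (m:ℚ) := by exact_mod_cast hkq_n
  have hm2 : (m:ℚ) + 1 ≤ (k:ℚ) * (q:ℚ) + (k:ℚ) := by
    have : m + 1 ≤ k * q + k := by nlinarith [hm2_n]
    exact_mod_cast this
  have hM1 : (1:ℚ) ≤ (m:ℚ) := by exact_mod_cast hn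
  have hS : (2:ℚ) ≤ (s:ℚ) := by exact_mod_cast hs
  have hK : (2:ℚ) ≤ (k:ℚ) := by exact_mod_cast hk
  have hN0 : (0:ℚ) ≤ (n:ℚ) := Nat.cast_nonneg n
  rw [hcast]
  exact change_bounds_rat (n:ℚ) (m:ℚ) (q:ℚ) (s:ℚ) (k:ℚ) hS hK hM1 hN0 hms hn2 hkq hm2
end

section
/- For all natural numbers L, M with L, M ≥ 1: Δ(L,M) = (1/(2k)) · Σ_{j=0}^{k−1} (⌊(L−j)/k⌋ + 1) · ((k−2)·((r·j + M) mod k) − ((r·j + M) mod k)²), where ⌊(L−j)/k⌋ denotes the floor of the integer (L−j) divided by k (which equals −1 when j > L). -/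
lemma ceil_div_nat (n : ℤ) (k : ℕ) (hk : 0 < k) :
    ⌈((n : ℚ)) / (k : ℚ)⌉ = (n - 1) / (k : ℤ) + 1 := by
  have hkQ : (0 : ℚ) < (k : ℚ) := by exact_mod_cast hk
  have hkZ : (0 : ℤ) < (k : ℤ) := by exact_mod_cast hk
  rw [Int.ceil_eq_iff]
  have h1 := Int.mul_ediv_add_emod (n - 1) (k : ℤ)
  have h2 := Int.emod_nonneg (n - 1) (ne_of_gt hkZ)
  have h3 := Int.emod_lt_of_pos (n - 1) hkZ
  constructor
  · rw [lt_div_iff₀ hkQ]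
    push_cast
    have h : ((n - 1) / (k : ℤ)) * (k : ℤ) < n := by linarith
    have h' : ((((n - 1) / (k : ℤ)) : ℤ) : ℚ) * (k : ℚ) < (n : ℚ) := by exact_mod_cast h
    linarith
  · rw [div_le_iff₀ hkQ]
    push_cast
    have : n ≤ ((n - 1) / (k : ℤ) + 1) * (k : ℤ) := by
      have : ((n - 1) / (k : ℤ) + 1) * (k : ℤ)
          = (k : ℤ) * ((n - 1) / (k : ℤ)) + (k : ℤ) := by ring
      rw [this]; linarith
    have h' : (n : ℚ) ≤ ((((n - 1) / (k : ℤ) + 1) : ℤ) : ℚ) * (k : ℚ) := by exact_mod_cast this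
    push_cast at h'
    linarith

lemma card_residue (k : ℕ) (hk : 0 < k) (L j : ℕ) (hj : j < k) :
    ((((Finset.range (L + 1)).filter (fun i => i % k = j)).card : ℚ))
      = ((((L : ℤ) - (j : ℤ)) / (k : ℤ) : ℤ) : ℚ) + 1 := by
  have hcount : (L + 1).count (· ≡ j [MOD k]) = ⌈(((L + 1 : ℕ) : ℚ) - ((j % k : ℕ) : ℚ)) / (k : ℚ)⌉ :=
    Nat.count_modEq_card_eq_ceil (L + 1) hk j
  have hfilter : ((Finset.range (L + 1)).filter (fun i => i % k = j)).card
      = (L + 1).count (· ≡ j [MOD k]) := by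
    rw [Nat.count_eq_card_filter_range]
    congr 1
    ext x
    simp [Nat.ModEq, Nat.mod_eq_of_lt hj]
  have hint : ((((Finset.range (L + 1)).filter (fun i => i % k = j)).card : ℤ))
      = ((L : ℤ) - (j : ℤ)) / (k : ℤ) + 1 := by
    rw [hfilter, hcount, Nat.mod_eq_of_lt hj]
    have h1 : (((L + 1 : ℕ) : ℚ) - (j : ℚ)) / (k : ℚ)
        = (((L : ℤ) - (j : ℤ) + 1 : ℤ) : ℚ) / ((k : ℕ) : ℚ) := by
      push_cast; ring
    rw [h1, ceil_div_nat _ _ hk]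
    simp only [add_sub_cancel_right]
  have := congrArg (fun z : ℤ => (z : ℚ)) hint
  push_cast at this ⊢
  linarith [this]

/-- For `Δ(L,M) = Σ_{i=0}^{L} ((k−2)·((r·i+M) mod k) − ((r·i+M) mod k)²)/(2k)` (a rational
number), we have
`Δ(L,M) = (1/(2k)) · Σ_{j=0}^{k−1} (⌊(L−j)/k⌋ + 1) · ((k−2)·((r·j+M) mod k) − ((r·j+M) mod k)²)`,
where `⌊(L−j)/k⌋` is integer (floor) division. -/
theorem Delta_formula (r k : ℕ) (hk : 2 ≤ k) (L M : ℕ) (hL : 1 ≤ L) (hM : 1 ≤ M) :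
    (∑ i ∈ Finset.range (L + 1),
        (((k : ℚ) - 2) * (((r * i + M) % k : ℕ) : ℚ) - (((r * i + M) % k : ℕ) : ℚ) ^ 2)
          / (2 * (k : ℚ)))
      = (1 / (2 * (k : ℚ))) *
          ∑ j ∈ Finset.range k,
            (((((L : ℤ) - (j : ℤ)) / (k : ℤ) : ℤ) : ℚ) + 1) *
              (((k : ℚ) - 2) * (((r * j + M) % k : ℕ) : ℚ)
                - (((r * j + M) % k : ℕ) : ℚ) ^ 2) := by
  have hk0 : 0 < k := by omega
  set g : ℕ → ℚ := fun j =>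
    ((k : ℚ) - 2) * (((r * j + M) % k : ℕ) : ℚ) - (((r * j + M) % k : ℕ) : ℚ) ^ 2 with hg
  have hmod : ∀ i : ℕ, g (i % k) = g i := by
    intro i
    have : (r * (i % k) + M) % k = (r * i + M) % k :=
      ((Nat.mod_modEq i k).mul_left r).add_right M
    simp only [hg, this]
  have key : ∑ i ∈ Finset.range (L + 1), g i
      = ∑ j ∈ Finset.range k,
          (((((L : ℤ) - (j : ℤ)) / (k : ℤ) : ℤ) : ℚ) + 1) * g j := by
    have hfib : ∑ j ∈ Finset.range k,
        ∑ i ∈ (Finset.range (L + 1)).filter (fun i => i % k = j), g i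
        = ∑ i ∈ Finset.range (L + 1), g i :=
      Finset.sum_fiberwise_of_maps_to (fun i _ => Finset.mem_range.mpr (Nat.mod_lt i hk0)) g
    rw [← hfib]
    refine Finset.sum_congr rfl fun j hj => ?_
    have hjk : j < k := Finset.mem_range.mp hj
    have : ∑ i ∈ (Finset.range (L + 1)).filter (fun i => i % k = j), g i
        = ((Finset.range (L + 1)).filter (fun i => i % k = j)).card • g j := by
      rw [← Finset.sum_const]
      refine Finset.sum_congr rfl fun i hi => ?_
      have := (Finset.mem_filter.mp hi).2
      rw [← hmod i, this]
    rw [this, nsmul_eq_mul, card_residue k hk0 L j hjk]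
  calc ∑ i ∈ Finset.range (L + 1), g i / (2 * (k : ℚ))
      = (1 / (2 * (k : ℚ))) * ∑ i ∈ Finset.range (L + 1), g i := by
        rw [Finset.mul_sum]; exact Finset.sum_congr rfl fun i _ => by ring
    _ = _ := by rw [key]
end

section
/- If k = 2 and r is odd, then for all natural numbers L, M ≥ 1: Δ(L,M) = −(2L + (1 + (−1)^L)·(1 + (−1)^{M+1}) + (1 + (−1)^{L+1}))/16. -/
lemma Delta_aux (M : ℕ) : ∀ L : ℕ,
    (∑ i ∈ Finset.range (L + 1),
        (((2 : ℚ) - 2) * (((i + M) % 2 : ℕ) : ℚ) - (((i + M) % 2 : ℕ) : ℚ) ^ 2)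
          / (2 * (2 : ℚ)))
      = -((2 * (L : ℚ) + (1 + (-1 : ℚ) ^ L) * (1 + (-1 : ℚ) ^ (M + 1))
            + (1 + (-1 : ℚ) ^ (L + 1))) / 16) := by
  intro L
  induction L with
  | zero =>
    simp only [Finset.sum_range_one, Nat.zero_add, Nat.cast_zero]
    rcases Nat.even_or_odd M with hM | hM
    · have h1 : M % 2 = 0 := Nat.even_iff.mp hM
      have h2 : (-1 : ℚ) ^ (M + 1) = -1 := (hM.add_one).neg_one_pow
      rw [h1, h2]; norm_num
    · have h1 : M % 2 = 1 := Nat.odd_iff.mp hM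
      have h2 : (-1 : ℚ) ^ (M + 1) = 1 := (hM.add_one).neg_one_pow
      rw [h1, h2]; norm_num
  | succ L ih =>
    rw [Finset.sum_range_succ, ih]
    rcases Nat.even_or_odd (L + 1 + M) with hp | hp
    · have h1 : (L + 1 + M) % 2 = 0 := Nat.even_iff.mp hp
      rcases Nat.even_or_odd L with hL | hL
      · -- L even, then M odd
        have e1 : (-1 : ℚ) ^ L = 1 := hL.neg_one_pow
        have hMo : Odd M := by
          rcases Nat.even_or_odd M with h | h
          · exfalso
            have := Nat.even_iff.mp hp
            have := Nat.even_iff.mp hL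
            have := Nat.even_iff.mp h
            omega
          · exact h
        have e2 : (-1 : ℚ) ^ (M + 1) = 1 := (hMo.add_one).neg_one_pow
        have e3 : (-1 : ℚ) ^ (L + 1) = -1 := (hL.add_one).neg_one_pow
        have e4 : (-1 : ℚ) ^ (L + 1 + 1) = 1 := by
          rw [pow_succ, e3]; ring
        rw [h1, e1, e2, e3, e4]; push_cast; ring
      · have e1 : (-1 : ℚ) ^ L = -1 := hL.neg_one_pow
        have hMe : Even M := by
          rcases Nat.even_or_odd M with h | h
          · exact h
          · exfalso
            have := Nat.even_iff.mp hp
            have := Nat.odd_iff.mp hL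
            have := Nat.odd_iff.mp h
            omega
        have e2 : (-1 : ℚ) ^ (M + 1) = -1 := (hMe.add_one).neg_one_pow
        have e3 : (-1 : ℚ) ^ (L + 1) = 1 := by rw [pow_succ, e1]; ring
        have e4 : (-1 : ℚ) ^ (L + 1 + 1) = -1 := by rw [pow_succ, e3]; ring
        rw [h1, e1, e2, e3, e4]; push_cast; ring
    · have h1 : (L + 1 + M) % 2 = 1 := Nat.odd_iff.mp hp
      rcases Nat.even_or_odd L with hL | hL
      · have e1 : (-1 : ℚ) ^ L = 1 := hL.neg_one_pow
        have hMe : Even M := by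
          rcases Nat.even_or_odd M with h | h
          · exact h
          · exfalso
            have := Nat.odd_iff.mp hp
            have := Nat.even_iff.mp hL
            have := Nat.odd_iff.mp h
            omega
        have e2 : (-1 : ℚ) ^ (M + 1) = -1 := (hMe.add_one).neg_one_pow
        have e3 : (-1 : ℚ) ^ (L + 1) = -1 := by rw [pow_succ, e1]; ring
        have e4 : (-1 : ℚ) ^ (L + 1 + 1) = 1 := by rw [pow_succ, e3]; ring
        rw [h1, e1, e2, e3, e4]; push_cast; ring
      · have e1 : (-1 : ℚ) ^ L = -1 := hL.neg_one_pow
        have hMo : Odd M := by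
          rcases Nat.even_or_odd M with h | h
          · exfalso
            have := Nat.odd_iff.mp hp
            have := Nat.odd_iff.mp hL
            have := Nat.even_iff.mp h
            omega
          · exact h
        have e2 : (-1 : ℚ) ^ (M + 1) = 1 := (hMo.add_one).neg_one_pow
        have e3 : (-1 : ℚ) ^ (L + 1) = 1 := by rw [pow_succ, e1]; ring
        have e4 : (-1 : ℚ) ^ (L + 1 + 1) = -1 := by rw [pow_succ, e3]; ring
        rw [h1, e1, e2, e3, e4]; push_cast; ring

/-- If `k = 2` and `r` is odd then
`Δ(L,M) = Σ_{i=0}^{L} ((k−2)·((r·i+M) mod k) − ((r·i+M) mod k)²)/(2k)`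
equals `−(2L + (1 + (−1)^L)·(1 + (−1)^{M+1}) + (1 + (−1)^{L+1}))/16`. -/
theorem Delta_k_two_r_odd (r k : ℕ) (hk : 2 ≤ k) (hk2 : k = 2) (hr : Odd r)
    (L M : ℕ) (hL : 1 ≤ L) (hM : 1 ≤ M) :
    (∑ i ∈ Finset.range (L + 1),
        (((k : ℚ) - 2) * (((r * i + M) % k : ℕ) : ℚ) - (((r * i + M) % k : ℕ) : ℚ) ^ 2)
          / (2 * (k : ℚ)))
      = -((2 * (L : ℚ) + (1 + (-1 : ℚ) ^ L) * (1 + (-1 : ℚ) ^ (M + 1))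
            + (1 + (-1 : ℚ) ^ (L + 1))) / 16) := by
  subst hk2
  have hr2 : r % 2 = 1 := Nat.odd_iff.mp hr
  have hmod : ∀ i : ℕ, (r * i + M) % 2 = (i + M) % 2 := by
    intro i
    simp [Nat.add_mod, Nat.mul_mod, hr2]
  rw [Finset.sum_congr rfl (fun i _ => by rw [hmod i])]
  exact Delta_aux M L
end

section
/- Suppose k = 2 and r is even. Let n = s·(r·L + M) + L₀ with 0 ≤ M ≤ r−1, 0 ≤ L₀ ≤ s−1, and L ≥ 1. Then, as rational numbers, d_n = (1/24) · (L+1) · (2r²L² + (r² + 6Mr + 12r)·L + 6M² + 24M + 24) − (1 + (−1)^{M+1})·(L+1)/8. -/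
open Finset

private def E3 (m : ℕ) : {p : ℕ × ℕ // p.1 + 2*p.2 ≤ m} ≃
    Σ c : Fin (m/2 + 1), Fin (m - 2*(c:ℕ) + 1) where
  toFun := fun ⟨⟨b, c⟩, h⟩ => by
    have h' : b + 2*c ≤ m := h
    exact ⟨⟨c, by omega⟩, ⟨b, show b < m - 2*c + 1 by omega⟩⟩
  invFun := fun ⟨⟨c, hc⟩, ⟨b, hb⟩⟩ => ⟨(b, c), by
    have hb' : b < m - 2*c + 1 := hb
    show b + 2*c ≤ m
    omega⟩
  left_inv := fun ⟨⟨b, c⟩, h⟩ => rfl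
  right_inv := fun ⟨⟨c, hc⟩, ⟨b, hb⟩⟩ => rfl

private def E2 (r N L M : ℕ) (hM : M < r) (hN : N = r*L + M) :
    {t : ℕ × ℕ × ℕ // t.1 + 2*t.2.1 + r*t.2.2 ≤ N} ≃
    Σ e : Fin (L+1), {p : ℕ × ℕ // p.1 + 2*p.2 ≤ N - r*(e:ℕ)} where
  toFun := fun ⟨⟨b, c, e⟩, h⟩ => by
    have h' : b + 2*c + r*e ≤ N := h
    exact ⟨⟨e, by
        have h1 : r * e ≤ N := by omega
        have h2 : r * e < r * (L+1) := by
          have h3 : r * (L+1) = r*L + r := by ring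
          omega
        exact Nat.lt_of_mul_lt_mul_left h2⟩,
      ⟨(b, c), show b + 2*c ≤ N - r*e by omega⟩⟩
  invFun := fun ⟨⟨e, he⟩, ⟨⟨b, c⟩, hp⟩⟩ => ⟨(b, c, e), by
    have hp' : b + 2*c ≤ N - r*e := hp
    have h1 : r * e ≤ r * L := Nat.mul_le_mul_left r (Nat.lt_succ_iff.mp he)
    show b + 2*c + r*e ≤ N
    omega⟩
  left_inv := fun ⟨⟨b, c, e⟩, h⟩ => rfl
  right_inv := fun ⟨⟨e, he⟩, ⟨⟨b, c⟩, hp⟩⟩ => rfl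

private def E1 (s r n N L₀ : ℕ) (hL₀ : L₀ < s) (hn : n = s * N + L₀) :
    {q : ℕ × ℕ × ℕ × ℕ // q.1 + s*q.2.1 + 2*s*q.2.2.1 + r*s*q.2.2.2 = n} ≃
    {t : ℕ × ℕ × ℕ // t.1 + 2*t.2.1 + r*t.2.2 ≤ N} where
  toFun := fun ⟨⟨a, b, c, e⟩, h⟩ => by
    have h' : a + s*b + 2*s*c + r*s*e = n := h
    exact ⟨(b, c, e), by
      show b + 2*c + r*e ≤ N
      have h1 : s*(b + 2*c + r*e) = s*b + 2*s*c + r*s*e := by ring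
      have h3 : s*(N+1) = s*N + s := by ring
      have h2 : s*(b + 2*c + r*e) < s*(N+1) := by omega
      exact Nat.le_of_lt_succ (Nat.lt_of_mul_lt_mul_left h2)⟩
  invFun := fun ⟨⟨b, c, e⟩, h⟩ => by
    have h' : b + 2*c + r*e ≤ N := h
    exact ⟨(n - s*(b + 2*c + r*e), b, c, e), by
      show n - s*(b + 2*c + r*e) + s*b + 2*s*c + r*s*e = n
      have h1 : s*(b + 2*c + r*e) = s*b + 2*s*c + r*s*e := by ring
      have h2 : s*(b + 2*c + r*e) ≤ s*N := Nat.mul_le_mul_left s h'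
      omega⟩
  left_inv := fun ⟨⟨a, b, c, e⟩, h⟩ => by
    have h' : a + s*b + 2*s*c + r*s*e = n := h
    apply Subtype.ext
    have h1 : s*(b + 2*c + r*e) = s*b + 2*s*c + r*s*e := by ring
    have h2 : n - s*(b + 2*c + r*e) = a := by omega
    show (n - s*(b + 2*c + r*e), b, c, e) = (a, b, c, e)
    rw [h2]
  right_inv := fun ⟨⟨b, c, e⟩, h⟩ => rfl

private lemma card_eq (s r L M L₀ n : ℕ) (hM : M < r) (hL₀ : L₀ < s)
    (hn : n = s * (r*L + M) + L₀) :
    Nat.card {q : ℕ × ℕ × ℕ × ℕ // q.1 + s*q.2.1 + 2*s*q.2.2.1 + r*s*q.2.2.2 = n}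
    = ∑ e ∈ range (L+1), ∑ c ∈ range ((r*L + M - r*e)/2 + 1), (r*L + M - r*e - 2*c + 1) := by
  have key := Nat.card_congr
    (((E1 s r n (r*L+M) L₀ hL₀ hn).trans (E2 r (r*L+M) L M hM rfl)).trans
      (Equiv.sigmaCongrRight (fun e => E3 (r*L + M - r*(e:ℕ)))))
  rw [key, Nat.card_eq_fintype_card]
  simp only [Fintype.card_sigma, Fintype.card_fin]
  rw [Fin.sum_univ_eq_sum_range
    (fun e => ∑ c : Fin ((r*L + M - r*e)/2 + 1), (r*L + M - r*e - 2*(c:ℕ) + 1))]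
  exact Finset.sum_congr rfl fun e _ =>
    Fin.sum_univ_eq_sum_range (fun c => r*L + M - r*e - 2*c + 1) _

private lemma sum_prod_formula (a b c : ℚ) (n : ℕ) :
    ∑ j ∈ range n, ((a*j+b)*(a*j+c)) =
      a^2*((n:ℚ)*(n-1)*(2*n-1)/6) + a*(b+c)*((n:ℚ)*(n-1)/2) + n*b*c := by
  induction n with
  | zero => simp
  | succ n ih => rw [Finset.sum_range_succ, ih]; push_cast; ring

private lemma inner_even (t : ℕ) : ∑ c ∈ range (t+1), (2*t - 2*c + 1) = (t+1)^2 := by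
  induction t with
  | zero => simp
  | succ t ih =>
    rw [Finset.sum_range_succ']
    have h : ∑ i ∈ range (t+1), (2*(t+1) - 2*(i+1) + 1)
        = ∑ i ∈ range (t+1), (2*t - 2*i + 1) :=
      Finset.sum_congr rfl (fun i hi => by omega)
    rw [h, ih]
    simp only [Nat.mul_zero, Nat.sub_zero]
    ring

private lemma inner_odd (t : ℕ) : ∑ c ∈ range (t+1), (2*t+1 - 2*c + 1) = (t+1)*(t+2) := by
  induction t with
  | zero => simp
  | succ t ih =>
    rw [Finset.sum_range_succ']
    have h : ∑ i ∈ range (t+1), (2*(t+1)+1 - 2*(i+1) + 1)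
        = ∑ i ∈ range (t+1), (2*t+1 - 2*i + 1) :=
      Finset.sum_congr rfl (fun i hi => by omega)
    rw [h, ih]
    simp only [Nat.mul_zero, Nat.sub_zero]
    ring

/-- If `k = 2` and `r` is even, exact formula for the number `d_n` of ways to make change of
`n = s·(r·L + M) + L₀` cents using the coin set `{1, s, k·s, r·s}`. -/
theorem change_four_coins_k_two_r_even (s k r : ℕ) (hs : 2 ≤ s) (hk : 2 ≤ k) (hr : 2 ≤ r)
    (hkr : k < r) (hk2 : k = 2) (hre : Even r)
    (n L M L₀ : ℕ) (hL : 1 ≤ L) (hM : M ≤ r - 1) (hL₀ : L₀ ≤ s - 1)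
    (hn : n = s * (r * L + M) + L₀) :
    (Nat.card {q : ℕ × ℕ × ℕ × ℕ //
        q.1 + s * q.2.1 + k * s * q.2.2.1 + r * s * q.2.2.2 = n} : ℚ)
      = (1 / 24) * ((L : ℚ) + 1) *
          (2 * (r : ℚ) ^ 2 * (L : ℚ) ^ 2
            + ((r : ℚ) ^ 2 + 6 * (M : ℚ) * (r : ℚ) + 12 * (r : ℚ)) * (L : ℚ)
            + 6 * (M : ℚ) ^ 2 + 24 * (M : ℚ) + 24)
        - (1 + (-1 : ℚ) ^ (M + 1)) * ((L : ℚ) + 1) / 8 := by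
  subst hk2
  rw [card_eq s r L M L₀ n (by omega) (by omega) hn]
  have hrefl : ∑ e ∈ range (L+1), ∑ c ∈ range ((r*L + M - r*e)/2 + 1), (r*L + M - r*e - 2*c + 1)
      = ∑ j ∈ range (L+1), ∑ c ∈ range ((r*j + M)/2 + 1), (r*j + M - 2*c + 1) := by
    rw [← Finset.sum_range_reflect]
    apply Finset.sum_congr rfl
    intro j hj
    have hj' : j < L + 1 := Finset.mem_range.mp hj
    have h0 : L + 1 - 1 - j = L - j := by omega
    have h1 : r*L + M - r*(L - j) = r*j + M := by
      have h2 : r*(L-j) + r*j = r*L := by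
        rw [← Nat.mul_add]
        congr 1
        omega
      omega
    rw [h0, h1]
  rw [hrefl]
  obtain ⟨u, hu⟩ := hre
  subst hu
  rcases Nat.even_or_odd M with hMe | hMo
  · obtain ⟨v, hv⟩ := hMe
    subst hv
    have hsum : ∑ j ∈ range (L+1), ∑ c ∈ range (((u+u)*j + (v+v))/2 + 1), ((u+u)*j + (v+v) - 2*c + 1)
        = ∑ j ∈ range (L+1), (u*j+v+1)^2 := by
      apply Finset.sum_congr rfl
      intro j _
      have hm : (u+u)*j + (v+v) = 2*(u*j+v) := by ring
      have hd : (2*(u*j+v))/2 = u*j+v := by omega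
      rw [hm, hd]
      exact inner_even (u*j+v)
    rw [hsum]
    have hpow : (-1:ℚ)^(v+v+1) = -1 := Odd.neg_one_pow ⟨v, by omega⟩
    rw [hpow]
    push_cast
    have hterm : ∑ j ∈ range (L+1), ((u:ℚ)*j + v + 1)^2
        = ∑ j ∈ range (L+1), (((u:ℚ)*j + ((v:ℚ)+1))*((u:ℚ)*j + ((v:ℚ)+1))) :=
      Finset.sum_congr rfl fun j _ => by ring
    rw [hterm, sum_prod_formula]
    push_cast
    ring
  · obtain ⟨v, hv⟩ := hMo
    subst hv
    have hsum : ∑ j ∈ range (L+1), ∑ c ∈ range (((u+u)*j + (2*v+1))/2 + 1), ((u+u)*j + (2*v+1) - 2*c + 1)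
        = ∑ j ∈ range (L+1), ((u*j+v+1)*(u*j+v+2)) := by
      apply Finset.sum_congr rfl
      intro j _
      have hm : (u+u)*j + (2*v+1) = 2*(u*j+v)+1 := by ring
      have hd : (2*(u*j+v)+1)/2 = u*j+v := by omega
      rw [hm, hd]
      exact inner_odd (u*j+v)
    rw [hsum]
    have hpow : (-1:ℚ)^(2*v+1+1) = 1 := Even.neg_one_pow ⟨v+1, by omega⟩
    rw [hpow]
    push_cast
    have hterm : ∑ j ∈ range (L+1), (((u:ℚ)*j + v + 1)*((u:ℚ)*j + v + 2))
        = ∑ j ∈ range (L+1), (((u:ℚ)*j + ((v:ℚ)+1))*((u:ℚ)*j + ((v:ℚ)+2))) :=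
      Finset.sum_congr rfl fun j _ => by ring
    rw [hterm, sum_prod_formula]
    push_cast
    ring
end

section
/- Suppose k = 2 and r is odd. Let n = s·(r·L + M) + L₀ with 0 ≤ M ≤ r−1, 0 ≤ L₀ ≤ s−1, and L ≥ 1. Then, as rational numbers, d_n = (1/24) · (L+1) · (2r²L² + (r² + 6Mr + 12r)·L + 6M² + 24M + 24) − (2L + (1 + (−1)^L)·(1 + (−1)^{M+1}) + (1 + (−1)^{L+1}))/16. -/
open Finset

def gfun (w : ℕ) : ℕ := ∑ c ∈ Finset.range (w+1), (w + 1 - 2*c)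

lemma gfun_step (w : ℕ) : gfun (w+2) = gfun w + (w+3) := by
  unfold gfun
  rw [show w+2+1 = (w+2)+1 from rfl, Finset.sum_range_succ']
  have h : ∀ i, w + 2 + 1 - 2*(i+1) = w + 1 - 2*i := by intro i; omega
  simp only [h]
  rw [Finset.sum_range_succ]
  omega

lemma gfun_cast (w : ℕ) : (gfun w : ℚ) = ((w:ℚ)+2)^2/4 - (1 - (-1:ℚ)^w)/8 := by
  induction w using Nat.strong_induction_on with
  | _ w ih =>
    match w with
    | 0 => norm_num [gfun]
    | 1 => norm_num [gfun, Finset.sum_range_succ]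
    | (w+2) =>
      rw [gfun_step]
      push_cast [ih w (by omega)]
      rw [pow_succ, pow_succ]
      ring

lemma neg_one_pow_rjM (r j M : ℕ) (hro : Odd r) :
    (-1:ℚ)^(r*j+M) = (-1:ℚ)^j * (-1:ℚ)^M := by
  rw [pow_add, pow_mul, Odd.neg_one_pow hro]

lemma sum_gfun (r M : ℕ) (hro : Odd r) (L : ℕ) :
    ∑ j ∈ Finset.range (L+1), (gfun (r*j+M) : ℚ)
      = (1 / 24) * ((L : ℚ) + 1) *
          (2 * (r : ℚ) ^ 2 * (L : ℚ) ^ 2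
            + ((r : ℚ) ^ 2 + 6 * (M : ℚ) * (r : ℚ) + 12 * (r : ℚ)) * (L : ℚ)
            + 6 * (M : ℚ) ^ 2 + 24 * (M : ℚ) + 24)
        - (2 * (L : ℚ) + (1 + (-1 : ℚ) ^ L) * (1 + (-1 : ℚ) ^ (M + 1))
            + (1 + (-1 : ℚ) ^ (L + 1))) / 16 := by
  induction L with
  | zero =>
    rw [Finset.sum_range_one, gfun_cast, neg_one_pow_rjM r 0 M hro]
    push_cast
    rw [pow_succ]
    ring
  | succ L ih =>
    rw [Finset.sum_range_succ, ih, gfun_cast, neg_one_pow_rjM r (L+1) M hro]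
    push_cast
    rw [pow_succ (-1:ℚ) (L+1), pow_succ (-1:ℚ) L, pow_succ (-1:ℚ) M]
    ring

lemma sum_ind (m t : ℕ) : ∑ b ∈ Finset.range (m+1), (if b + t ≤ m then 1 else 0) = m + 1 - t := by
  rw [← Finset.card_filter]
  have : Finset.filter (fun b => b + t ≤ m) (Finset.range (m+1)) = Finset.range (m+1-t) := by
    ext b; simp [Finset.mem_filter, Finset.mem_range]; omega
  rw [this, Finset.card_range]

lemma count_eq (s r L M L₀ n : ℕ) (hM : M < r) (hL₀ : L₀ < s)
    (hn : n = s * (r * L + M) + L₀) :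
    Nat.card {q : ℕ × ℕ × ℕ × ℕ //
        q.1 + s * q.2.1 + 2 * s * q.2.2.1 + r * s * q.2.2.2 = n}
      = ∑ j ∈ Finset.range (L+1), gfun (r*j+M) := by
  set N := r * L + M with hN
  -- Step 1: equiv to triples
  have E1 : {q : ℕ × ℕ × ℕ × ℕ //
        q.1 + s * q.2.1 + 2 * s * q.2.2.1 + r * s * q.2.2.2 = n}
      ≃ {t : ℕ × ℕ × ℕ // t.1 + 2 * t.2.1 + r * t.2.2 ≤ N} := by
    refine ⟨fun q => ⟨(q.1.2.1, q.1.2.2.1, q.1.2.2.2), ?_⟩,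
      fun t => ⟨(n - s * (t.1.1 + 2 * t.1.2.1 + r * t.1.2.2), t.1.1, t.1.2.1, t.1.2.2), ?_⟩,
      ?_, ?_⟩
    · obtain ⟨⟨a, b, c, e⟩, h⟩ := q
      simp only at h ⊢
      have hX : s * b + 2 * s * c + r * s * e = s * (b + 2 * c + r * e) := by ring
      have h2 : s * (b + 2 * c + r * e) < s * (N + 1) := by
        have : s * (N + 1) = s * N + s := by ring
        omega
      exact Nat.lt_succ_iff.mp (Nat.lt_of_mul_lt_mul_left h2)
    · obtain ⟨⟨b, c, e⟩, h⟩ := t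
      simp only at h ⊢
      have hX : s * b + 2 * s * c + r * s * e = s * (b + 2 * c + r * e) := by ring
      have h2 : s * (b + 2 * c + r * e) ≤ s * N := Nat.mul_le_mul_left s h
      omega
    · rintro ⟨⟨a, b, c, e⟩, h⟩
      apply Subtype.ext
      simp only at h ⊢
      have hX : s * b + 2 * s * c + r * s * e = s * (b + 2 * c + r * e) := by ring
      have : n - s * (b + 2 * c + r * e) = a := by omega
      simp [this]
    · rintro ⟨⟨b, c, e⟩, h⟩
      rfl
  rw [Nat.card_congr E1]
  -- Step 2: as a Finset
  classical
  set F : Finset (ℕ × ℕ × ℕ) :=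
    (Finset.range (N+1) ×ˢ Finset.range (N+1) ×ˢ Finset.range (L+1)).filter
      (fun t => t.1 + 2 * t.2.1 + r * t.2.2 ≤ N) with hF
  have E2 : {t : ℕ × ℕ × ℕ // t.1 + 2 * t.2.1 + r * t.2.2 ≤ N} ≃ {t // t ∈ F} := by
    apply Equiv.subtypeEquivRight
    intro t
    simp only [hF, Finset.mem_filter, Finset.mem_product, Finset.mem_range]
    constructor
    · intro h
      refine ⟨⟨?_, ?_, ?_⟩, h⟩
      · omega
      · omega
      · have h1 : r * t.2.2 ≤ N := by omega
        have h2 : r * t.2.2 < r * (L + 1) := by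
          have : r * (L + 1) = r * L + r := by ring
          omega
        exact Nat.lt_of_mul_lt_mul_left h2
    · exact fun h => h.2
  rw [Nat.card_congr E2, Nat.card_eq_finsetCard, hF, Finset.card_filter]
  rw [Finset.sum_product, Finset.sum_comm, Finset.sum_product, Finset.sum_comm]
  -- now: ∑ e ∈ range (L+1), ∑ c ∈ range (N+1), ∑ b ∈ range (N+1), ite
  have step : ∀ e ∈ Finset.range (L+1),
      (∑ c ∈ Finset.range (N+1), ∑ b ∈ Finset.range (N+1),
        (if b + 2 * c + r * e ≤ N then 1 else 0)) = gfun (r * (L - e) + M) := by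
    intro e he
    simp only [Finset.mem_range] at he
    have hre : r * e ≤ r * L := Nat.mul_le_mul_left r (by omega)
    have h1 : r * (L - e) + r * e = r * L := by rw [← Nat.mul_add]; congr 1; omega
    set w := r * (L - e) + M with hw
    have hwN : w + r * e = N := by omega
    have inner : ∀ c, (∑ b ∈ Finset.range (N+1),
        (if b + 2 * c + r * e ≤ N then 1 else 0)) = N + 1 - (2 * c + r * e) := by
      intro c
      rw [← sum_ind N (2 * c + r * e)]
      apply Finset.sum_congr rfl
      intro b _
      congr 1
      simp only [eq_iff_iff]
      omega
    simp only [inner]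
    have hsub : Finset.range (w+1) ⊆ Finset.range (N+1) := by
      apply Finset.range_subset_range.mpr; omega
    rw [← Finset.sum_subset hsub (fun c _ hc => by
      simp only [Finset.mem_range] at hc ⊢; omega)]
    unfold gfun
    apply Finset.sum_congr rfl
    intro c hc
    simp only [Finset.mem_range] at hc
    omega
  rw [Finset.sum_congr rfl step]
  rw [← Finset.sum_range_reflect (fun j => gfun (r * j + M)) (L+1)]
  simp only [Nat.add_sub_cancel]

/-- If `k = 2` and `r` is odd, exact formula for the number `d_n` of ways to make change of
`n = s·(r·L + M) + L₀` cents using the coin set `{1, s, k·s, r·s}`. -/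
theorem change_four_coins_k_two_r_odd (s k r : ℕ) (hs : 2 ≤ s) (hk : 2 ≤ k) (hr : 2 ≤ r)
    (hkr : k < r) (hk2 : k = 2) (hro : Odd r)
    (n L M L₀ : ℕ) (hL : 1 ≤ L) (hM : M ≤ r - 1) (hL₀ : L₀ ≤ s - 1)
    (hn : n = s * (r * L + M) + L₀) :
    (Nat.card {q : ℕ × ℕ × ℕ × ℕ //
        q.1 + s * q.2.1 + k * s * q.2.2.1 + r * s * q.2.2.2 = n} : ℚ)
      = (1 / 24) * ((L : ℚ) + 1) *
          (2 * (r : ℚ) ^ 2 * (L : ℚ) ^ 2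
            + ((r : ℚ) ^ 2 + 6 * (M : ℚ) * (r : ℚ) + 12 * (r : ℚ)) * (L : ℚ)
            + 6 * (M : ℚ) ^ 2 + 24 * (M : ℚ) + 24)
        - (2 * (L : ℚ) + (1 + (-1 : ℚ) ^ L) * (1 + (-1 : ℚ) ^ (M + 1))
            + (1 + (-1 : ℚ) ^ (L + 1))) / 16 := by
  subst hk2
  rw [count_eq s r L M L₀ n (by omega) (by omega) hn]
  rw [Nat.cast_sum]
  exact sum_gfun r M hro L
end

section
/- Let n be a natural number, set L = ⌊n/25⌋ and M = ⌊(n mod 25)/5⌋, and suppose L ≥ 1. Then, as rational numbers, d_n = (1/24) · (L+1) · (50L² + (85 + 30M)·L + 6M² + 24M + 24) − (2L + (1 + (−1)^L)·(1 + (−1)^{M+1}) + (1 + (−1)^{L+1}))/16. -/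
/-!
The pennies are determined by the other coins, so `d_n` counts the triples `(b, c, e)` with
`5b + 10c + 25e ≤ n`. With `e` quarters fixed, the nickels and dimes form a pair with
`b + 2c ≤ k`, where `k = ⌊(n - 25e)/5⌋ = 5(L - e) + M`, and there are `⌊(k + 2)²/4⌋` such pairs.
Writing `⌊k²/4⌋ = (2k² - 1 + (-1)^k)/8` turns the sum over `e` into a polynomial part and an
alternating part, both evaluated by induction on `L`.
-/

open Finset

theorem Nat.card_subtype_le (m : ℕ) : Nat.card {b : ℕ // b ≤ m} = m + 1 := by
  change Nat.card (Set.Iic m) = m + 1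
  simp

theorem Nat.card_subtype_add_eq {α : Type*} (g : α → ℕ) (n : ℕ) :
    Nat.card {p : ℕ × α // p.1 + g p.2 = n} = Nat.card {y : α // g y ≤ n} :=
  Nat.card_congr
    { toFun := fun p => ⟨p.1.2, by have := p.2; omega⟩
      invFun := fun y => ⟨(n - g y, y), by have := y.2; dsimp only; omega⟩
      left_inv := fun p => Subtype.ext (Prod.ext (by have := p.2; dsimp only; omega) rfl)
      right_inv := fun y => rfl }

theorem Nat.card_subtype_add_mul_le {α : Type*} (g : α → ℕ)
    (hg : ∀ m, Finite {x : α // g x ≤ m}) {d : ℕ} (hd : 0 < d) (n : ℕ) :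
    Nat.card {p : α × ℕ // g p.1 + d * p.2 ≤ n}
      = ∑ e ∈ range (n / d + 1), Nat.card {x : α // g x ≤ n - d * e} := by
  have hfib (e : ℕ) : d * e ≤ n ↔ e ∈ range (n / d + 1) := by
    rw [mem_range, Nat.lt_succ_iff, Nat.le_div_iff_mul_le hd, mul_comm]
  let fib : {p : α × ℕ // g p.1 + d * p.2 ≤ n}
      ≃ Σ e : range (n / d + 1), {x : α // g x ≤ n - d * e} :=
    { toFun := fun p => ⟨⟨p.1.2, (hfib _).1 (by have := p.2; omega)⟩,
        ⟨p.1.1, by have := p.2; dsimp only; omega⟩⟩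
      invFun := fun q => ⟨(q.2.1, q.1.1), by
        have := (hfib _).2 q.1.2; have := q.2.2; dsimp only; omega⟩
      left_inv := fun p => rfl
      right_inv := fun q => rfl }
  rw [Nat.card_congr fib, Nat.card_sigma]
  exact sum_coe_sort _ fun e => Nat.card {x : α // g x ≤ n - d * e}

theorem sum_range_sub_two_mul_add_one (k : ℕ) :
    ∑ c ∈ range (k / 2 + 1), (k - 2 * c + 1) = (k + 2) ^ 2 / 4 := by
  induction k using Nat.twoStepInduction with
  | zero => rfl
  | one => rfl
  | more k ih _ =>
    have hsplit : ∀ c ∈ range (k / 2 + 1), k + 2 - 2 * c + 1 = (k - 2 * c + 1) + 2 := by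
      intro c hc
      rw [mem_range] at hc
      omega
    rw [show (k + 2) / 2 + 1 = k / 2 + 1 + 1 by omega, sum_range_succ, sum_congr rfl hsplit,
      sum_add_distrib, ih, sum_const, card_range, smul_eq_mul]
    have hsq : (k + 2 + 2) ^ 2 = (k + 2) ^ 2 + 4 * (k + 3) := by ring
    omega

theorem Nat.card_subtype_add_two_mul_le (k : ℕ) :
    Nat.card {p : ℕ × ℕ // p.1 + 2 * p.2 ≤ k} = (k + 2) ^ 2 / 4 := by
  refine (Nat.card_subtype_add_mul_le (fun b => b) (fun m => (Set.finite_Iic m).to_subtype)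
    two_pos k).trans ?_
  simp_rw [Nat.card_subtype_le]
  exact sum_range_sub_two_mul_add_one k

theorem Nat.cast_sq_div_four (k : ℕ) :
    ((k ^ 2 / 4 : ℕ) : ℚ) = (2 * k ^ 2 - 1 + (-1) ^ k) / 8 := by
  obtain ⟨t, rfl | rfl⟩ := Nat.even_or_odd' k
  · have hsq : (2 * t) ^ 2 = 4 * t ^ 2 := by ring
    rw [show (2 * t) ^ 2 / 4 = t ^ 2 by omega, pow_mul]
    push_cast
    ring
  · have hsq : (2 * t + 1) ^ 2 = 4 * (t ^ 2 + t) + 1 := by ring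
    rw [show (2 * t + 1) ^ 2 / 4 = t ^ 2 + t by omega, pow_succ (-1 : ℚ), pow_mul]
    push_cast
    ring

theorem cast_sum_range_sq_div_four (L M : ℕ) :
    ((∑ j ∈ range (L + 1), (5 * j + M + 2) ^ 2 / 4 : ℕ) : ℚ)
      = (1 / 24) * ((L : ℚ) + 1) *
          (50 * (L : ℚ) ^ 2 + (85 + 30 * (M : ℚ)) * (L : ℚ)
            + 6 * (M : ℚ) ^ 2 + 24 * (M : ℚ) + 24)
        - (2 * (L : ℚ) + (1 + (-1 : ℚ) ^ L) * (1 + (-1 : ℚ) ^ (M + 1))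
            + (1 + (-1 : ℚ) ^ (L + 1))) / 16 := by
  have hsign (j : ℕ) : (-1 : ℚ) ^ (5 * j + M + 2) = (-1) ^ j * (-1) ^ M := by
    rw [pow_add, pow_add, pow_mul]
    norm_num
  induction L with
  | zero =>
    rw [sum_range_one, Nat.cast_sq_div_four, hsign]
    push_cast
    ring
  | succ L ih =>
    rw [sum_range_succ, Nat.cast_add, ih, Nat.cast_sq_div_four, hsign]
    push_cast
    ring

theorem card_change_eq_sum (n : ℕ) :
    Nat.card {q : ℕ × ℕ × ℕ × ℕ // q.1 + 5 * q.2.1 + 10 * q.2.2.1 + 25 * q.2.2.2 = n}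
      = ∑ j ∈ range (n / 25 + 1), (5 * j + n % 25 / 5 + 2) ^ 2 / 4 := by
  have hpennies :
      Nat.card {q : ℕ × ℕ × ℕ × ℕ // q.1 + 5 * q.2.1 + 10 * q.2.2.1 + 25 * q.2.2.2 = n}
        = Nat.card {t : (ℕ × ℕ) × ℕ // 5 * t.1.1 + 10 * t.1.2 + 25 * t.2 ≤ n} := by
    rw [← Nat.card_subtype_add_eq fun t : (ℕ × ℕ) × ℕ => 5 * t.1.1 + 10 * t.1.2 + 25 * t.2]
    exact Nat.card_congr <| Equiv.subtypeEquiv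
      ((Equiv.refl ℕ).prodCongr (Equiv.prodAssoc ℕ ℕ ℕ).symm) fun q => by
        simp only [Equiv.prodCongr_apply, Equiv.coe_refl, Prod.map_fst, Prod.map_snd, id_eq,
          Equiv.prodAssoc_symm_apply]
        omega
  have hfinite (m : ℕ) : Finite {p : ℕ × ℕ // 5 * p.1 + 10 * p.2 ≤ m} :=
    ((Set.finite_Iic (m, m)).subset fun p (hp : 5 * p.1 + 10 * p.2 ≤ m) =>
      show p ≤ (m, m) from ⟨by omega, by omega⟩).to_subtype
  have hnickels (m : ℕ) :
      Nat.card {p : ℕ × ℕ // 5 * p.1 + 10 * p.2 ≤ m} = (m / 5 + 2) ^ 2 / 4 := by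
    rw [← Nat.card_subtype_add_two_mul_le]
    exact Nat.card_congr <| Equiv.subtypeEquivRight fun p => by omega
  rw [hpennies, Nat.card_subtype_add_mul_le _ hfinite (by norm_num), ← sum_range_reflect]
  refine sum_congr rfl fun e he => ?_
  rw [mem_range] at he
  rw [hnickels]
  congr 3
  omega

theorem change_usa_coins_formula_general (n L M : ℕ) (hL : L = n / 25) (hM : M = (n % 25) / 5) :
    (Nat.card {q : ℕ × ℕ × ℕ × ℕ //
        q.1 + 5 * q.2.1 + 10 * q.2.2.1 + 25 * q.2.2.2 = n} : ℚ)
      = (1 / 24) * ((L : ℚ) + 1) *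
          (50 * (L : ℚ) ^ 2 + (85 + 30 * (M : ℚ)) * (L : ℚ)
            + 6 * (M : ℚ) ^ 2 + 24 * (M : ℚ) + 24)
        - (2 * (L : ℚ) + (1 + (-1 : ℚ) ^ L) * (1 + (-1 : ℚ) ^ (M + 1))
            + (1 + (-1 : ℚ) ^ (L + 1))) / 16 := by
  subst hL hM
  rw [card_change_eq_sum]
  exact cast_sum_range_sq_div_four _ _

/-- Exact formula for the number of ways to make change of `n` cents using pennies,
nickels, dimes, and quarters, where `L = ⌊n/25⌋ ≥ 1` and `M = ⌊(n mod 25)/5⌋`. -/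
theorem change_usa_coins_formula (n L M : ℕ) (hL : L = n / 25) (hM : M = (n % 25) / 5)
    (hL1 : 1 ≤ L) :
    (Nat.card {q : ℕ × ℕ × ℕ × ℕ //
        q.1 + 5 * q.2.1 + 10 * q.2.2.1 + 25 * q.2.2.2 = n} : ℚ)
      = (1 / 24) * ((L : ℚ) + 1) *
          (50 * (L : ℚ) ^ 2 + (85 + 30 * (M : ℚ)) * (L : ℚ)
            + 6 * (M : ℚ) ^ 2 + 24 * (M : ℚ) + 24)
        - (2 * (L : ℚ) + (1 + (-1 : ℚ) ^ L) * (1 + (-1 : ℚ) ^ (M + 1))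
            + (1 + (-1 : ℚ) ^ (L + 1))) / 16 :=
  change_usa_coins_formula_general n L M hL hM
end

section
/- For every natural number n, the number of ways to make change of n using S equals Σ_{0 ≤ j ≤ M, j ≡ n (mod t)} a_j · C((n−j)/t + v − 1, v − 1), where C(·,·) is the binomial coefficient. Here M = Σ_{i=1}^{v} (t − t_i), and a_j is the number of v-tuples (c₁,…,c_v) ∈ ℕ^v with Σ_{i=1}^{v} c_i·t_i = j and c_i·t_i ≤ t − t_i for each i. -/
/-!
Put `d_i = T / t_i`. Dividing each `c_i` by `d_i` with remainder, `c_i = r_i + d_i q_i`, turns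
`Σ c_i t_i` into `j + T Σ q_i`, where `j = Σ r_i t_i ≤ M` and `r_i < d_i` means exactly
`r_i t_i ≤ T - t_i`. So the change count is `Σ_j a_j · #{q | j + T Σ q_i = n}`, and the second
factor is the stars-and-bars number `C((n - j)/T + v - 1, v - 1)` when `j ≡ n (mod T)`, `j ≤ n`,
and zero otherwise.
-/

open Finset

variable {ι : Type*}

def piDivModEquiv (d : ι → ℕ) (hd : ∀ i, 0 < d i) :
    (ι → ℕ) ≃ {r : ι → ℕ // ∀ i, r i < d i} × (ι → ℕ) where
  toFun c := (⟨fun i => c i % d i, fun i => Nat.mod_lt _ (hd i)⟩, fun i => c i / d i)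
  invFun p i := p.1.1 i + d i * p.2 i
  left_inv c := funext fun i => Nat.mod_add_div (c i) (d i)
  right_inv := by
    rintro ⟨⟨r, hr⟩, q⟩
    ext i
    · simp [Nat.mod_eq_of_lt (hr i)]
    · simp [Nat.add_mul_div_left _ _ (hd i), Nat.div_eq_of_lt (hr i)]

theorem Nat.lt_div_iff_mul_le_sub {r t T : ℕ} (ht : 0 < t) (htT : t ≤ T) :
    r < T / t ↔ r * t ≤ T - t := by
  rw [← Nat.add_one_le_iff, Nat.le_div_iff_mul_le ht, Nat.add_one_mul]
  omega

theorem Nat.card_subtype_add_eq_sum {α β : Type*} (f : α → ℕ) (g : β → ℕ) {M n : ℕ}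
    (hf : ∀ a, f a ≤ M) [Finite {p : α × β // f p.1 + g p.2 = n}] :
    Nat.card {p : α × β // f p.1 + g p.2 = n} =
      ∑ j ∈ range (M + 1), Nat.card {a // f a = j} * Nat.card {b // j + g b = n} := by
  let σ (j : range (M + 1)) := {a // f a = j} × {b // j + g b = n}
  let e : {p : α × β // f p.1 + g p.2 = n} ≃ Σ j, σ j :=
    { toFun := fun p =>
        ⟨⟨f p.1.1, mem_range_succ_iff.2 (hf _)⟩, ⟨p.1.1, rfl⟩, ⟨p.1.2, p.2⟩⟩
      invFun := fun x => ⟨(x.2.1.1, x.2.2.1), by rw [x.2.1.2]; exact x.2.2.2⟩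
      left_inv := fun _ => rfl
      right_inv := by
        rintro ⟨⟨j, _⟩, ⟨a, ha⟩, _⟩
        obtain rfl : f a = j := ha
        rfl }
  have : Finite (Σ j, σ j) := .of_equiv _ e
  have : ∀ j, Finite (σ j) := fun j => .of_injective _ (sigma_mk_injective (i := j))
  rw [Nat.card_congr e, Nat.card_sigma]
  simp only [σ, Nat.card_prod]
  exact sum_coe_sort _ fun j => Nat.card {a // f a = j} * Nat.card {b // j + g b = n}

theorem finite_subtype_sum_mul_eq [Fintype ι] {t : ι → ℕ} (ht : ∀ i, 0 < t i) (n : ℕ) :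
    Finite {c : ι → ℕ // ∑ i, c i * t i = n} := by
  classical
  refine Set.Finite.to_subtype <| (Set.finite_Iic fun _ => n).subset fun c hc i => ?_
  calc c i ≤ c i * t i := Nat.le_mul_of_pos_right _ (ht i)
    _ ≤ ∑ i, c i * t i := single_le_sum (f := fun i => c i * t i) (by simp) (mem_univ i)
    _ = n := hc

theorem card_sum_mul_eq_sum_card_residues [Fintype ι] {t : ι → ℕ} {T : ℕ} (hT : 0 < T)
    (hdvd : ∀ i, t i ∣ T) (n : ℕ) :
    Nat.card {c : ι → ℕ // ∑ i, c i * t i = n} =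
      ∑ j ∈ range (∑ i, (T - t i) + 1),
        Nat.card {r : ι → ℕ // (∑ i, r i * t i = j) ∧ ∀ i, r i * t i ≤ T - t i} *
          Nat.card {q : ι → ℕ // j + T * ∑ i, q i = n} := by
  have ht i : 0 < t i := Nat.pos_of_dvd_of_pos (hdvd i) hT
  have htT i : t i ≤ T := Nat.le_of_dvd hT (hdvd i)
  let R := {r : ι → ℕ // ∀ i, r i * t i ≤ T - t i}
  let w (r : R) : ℕ := ∑ i, r.1 i * t i
  let e : R × (ι → ℕ) ≃ (ι → ℕ) :=
    ((Equiv.subtypeEquivRight fun r => forall_congr' fun i =>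
        (Nat.lt_div_iff_mul_le_sub (ht i) (htT i)).symm).prodCongr (Equiv.refl _)).trans
      (piDivModEquiv (fun i => T / t i) fun i => Nat.div_pos (htT i) (ht i)).symm
  have hw (p : R × (ι → ℕ)) : ∑ i, e p i * t i = w p.1 + T * ∑ i, p.2 i := by
    rw [mul_sum, ← sum_add_distrib]
    refine sum_congr rfl fun i _ => ?_
    change (p.1.1 i + T / t i * p.2 i) * t i = _
    rw [add_mul, mul_right_comm, Nat.div_mul_cancel (hdvd i)]
  have : Finite {c : ι → ℕ // ∑ i, c i * t i = n} := finite_subtype_sum_mul_eq ht n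
  let e' : {p : R × (ι → ℕ) // w p.1 + T * ∑ i, p.2 i = n} ≃
      {c : ι → ℕ // ∑ i, c i * t i = n} :=
    e.subtypeEquiv fun p => by rw [hw]
  have : Finite {p : R × (ι → ℕ) // w p.1 + T * ∑ i, p.2 i = n} := .of_equiv _ e'.symm
  rw [← Nat.card_congr e', Nat.card_subtype_add_eq_sum w (fun q : ι → ℕ => T * ∑ i, q i)
    (n := n) fun r => sum_le_sum fun i _ => r.2 i]
  refine sum_congr rfl fun j _ => ?_
  congr 1
  exact Nat.card_congr <| (Equiv.subtypeSubtypeEquivSubtypeInter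
    (fun r : ι → ℕ => ∀ i, r i * t i ≤ T - t i) (fun r => ∑ i, r i * t i = j)).trans <|
    Equiv.subtypeEquivRight fun _ => and_comm

theorem Nat.card_subtype_sum_eq (ι : Type*) [Fintype ι] (k : ℕ) :
    Nat.card {q : ι → ℕ // ∑ i, q i = k} = (Fintype.card ι + k - 1).choose k := by
  classical
  rw [← Nat.card_congr (Sym.equivNatSumOfFintype ι k), Sym.natCard_sym_eq_choose,
    Nat.card_eq_fintype_card]

theorem card_add_mul_sum_eq_choose {v T j n : ℕ} (hv : 1 ≤ v) (hT : 0 < T)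
    (hmod : j % T = n % T) (hjv : j ≤ n ∨ 2 ≤ v) :
    Nat.card {q : Fin v → ℕ // j + T * ∑ i, q i = n} =
      ((((n : ℤ) - j) / T + v - 1).toNat).choose (v - 1) := by
  rcases le_or_gt j n with hjn | hnj
  · obtain ⟨k, hk⟩ : T ∣ n - j :=
      Nat.dvd_of_mod_eq_zero (Nat.sub_mod_eq_zero_of_mod_eq hmod.symm)
    have hquot : ((n : ℤ) - j) / T = k := by
      rw [← Nat.cast_sub hjn, hk, Nat.cast_mul,
        Int.mul_ediv_cancel_left _ (by exact_mod_cast hT.ne')]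
    have hsum (q : Fin v → ℕ) : j + T * ∑ i, q i = n ↔ ∑ i, q i = k := by
      have := Nat.mul_left_cancel_iff hT (m := ∑ i, q i) (k := k)
      omega
    rw [Nat.card_congr (Equiv.subtypeEquivRight hsum), Nat.card_subtype_sum_eq, Fintype.card_fin,
      hquot, show ((k : ℤ) + v - 1).toNat = k + (v - 1) by omega,
      show v + k - 1 = k + (v - 1) by omega, Nat.choose_symm_add]
  · have : IsEmpty {q : Fin v → ℕ // j + T * ∑ i, q i = n} := ⟨fun q => by omega⟩
    have hneg : ((n : ℤ) - j) / T < 0 :=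
      Int.ediv_neg_of_neg_of_pos (by omega) (by exact_mod_cast hT)
    rw [Nat.card_of_isEmpty, Nat.choose_eq_zero_of_lt]
    omega

theorem card_add_mul_sum_eq_zero {v T j n : ℕ} (hmod : j % T ≠ n % T) :
    Nat.card {q : Fin v → ℕ // j + T * ∑ i, q i = n} = 0 :=
  have : IsEmpty {q : Fin v → ℕ // j + T * ∑ i, q i = n} :=
    ⟨fun q => hmod <| by rw [← q.2, Nat.add_mul_mod_self_left]⟩
  Nat.card_of_isEmpty

theorem change_function_formula_general (v : ℕ) (hv : 1 ≤ v) (t : Fin v → ℕ) (hpos : ∀ i, 0 < t i)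
    (T : ℕ) (hT : T = Finset.univ.lcm t)
    (M : ℕ) (hM : M = ∑ i, (T - t i)) (a : ℕ → ℕ)
    (ha : ∀ j, a j = Nat.card {c : Fin v → ℕ //
        (∑ i, c i * t i = j) ∧ ∀ i, c i * t i ≤ T - t i}) (n : ℕ) :
    Nat.card {c : Fin v → ℕ // ∑ i, c i * t i = n}
      = ∑ j ∈ (Finset.range (M + 1)).filter (fun j => j % T = n % T),
          a j * Nat.choose ((((n : ℤ) - (j : ℤ)) / (T : ℤ) + (v : ℤ) - 1).toNat) (v - 1) := by
  have hdvd i : t i ∣ T := hT ▸ dvd_lcm (mem_univ i)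
  have hT0 : 0 < T := Nat.pos_of_ne_zero fun h => by
    obtain ⟨i, -, hi⟩ := lcm_eq_zero_iff.mp (hT ▸ h)
    exact (hpos i).ne' hi
  rw [card_sum_mul_eq_sum_card_residues hT0 hdvd, ← hM, sum_filter]
  refine sum_congr rfl fun j hj => ?_
  rw [← ha]
  split_ifs with hmod
  · -- for `v = 1` the binomial coefficient does not vanish when `j > n`, but then `M = 0`
    have hjv : j ≤ n ∨ 2 ≤ v := by
      rcases hv.eq_or_lt with rfl | hv2
      · have hM0 : M = 0 := by simp [hM, hT]
        simp only [hM0, zero_add, range_one, mem_singleton] at hj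
        exact .inl (hj ▸ Nat.zero_le n)
      · exact .inr hv2
    rw [card_add_mul_sum_eq_choose hv hT0 hmod hjv]
  · rw [card_add_mul_sum_eq_zero hmod, mul_zero]

/-- The change function for the coin set `{t₁,…,t_v}`: with `T = lcm(t₁,…,t_v)`,
`M = Σ_i (T − t_i)`, and `a_j` the number of `v`-tuples with `Σ c_i·t_i = j` and
`c_i·t_i ≤ T − t_i` for each `i`, the number of ways to make change of `n` is
`Σ_{0 ≤ j ≤ M, j ≡ n (mod T)} a_j · C((n−j)/T + v − 1, v − 1)`
(where `(n−j)/T` is integer floor division, and the binomial coefficient vanishes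
when its top argument is negative). -/
theorem change_function_formula (v : ℕ) (hv : 1 ≤ v) (t : Fin v → ℕ) (hpos : ∀ i, 0 < t i)
    (hmono : StrictMono t) (T : ℕ) (hT : T = Finset.univ.lcm t)
    (M : ℕ) (hM : M = ∑ i, (T - t i)) (a : ℕ → ℕ)
    (ha : ∀ j, a j = Nat.card {c : Fin v → ℕ //
        (∑ i, c i * t i = j) ∧ ∀ i, c i * t i ≤ T - t i}) (n : ℕ) :
    Nat.card {c : Fin v → ℕ // ∑ i, c i * t i = n}
      = ∑ j ∈ (Finset.range (M + 1)).filter (fun j => j % T = n % T),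
          a j * Nat.choose ((((n : ℤ) - (j : ℤ)) / (T : ℤ) + (v : ℤ) - 1).toNat) (v - 1) :=
  change_function_formula_general v hv t hpos T hT M hM a ha n
end

section
/- The change function of S is quasi-polynomial with period t = lcm(t₁,…,t_v): for each residue ρ with 0 ≤ ρ ≤ t−1 there exists a polynomial p_ρ with rational coefficients such that for every natural number n with n ≡ ρ (mod t), the number of ways to make change of n using S equals p_ρ(n). -/
section ChangeQP
open Polynomial Finset

lemma faulhaber_poly (p : Polynomial ℚ) :
    ∃ P : Polynomial ℚ, ∀ N : ℕ, ∑ k ∈ Finset.range N, p.eval (k : ℚ) = P.eval (N : ℚ) := by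
  induction p using Polynomial.induction_on' with
  | add f g hf hg =>
      obtain ⟨F, hF⟩ := hf; obtain ⟨G, hG⟩ := hg
      exact ⟨F + G, fun N => by simp [Finset.sum_add_distrib, hF, hG]⟩
  | monomial d c =>
      refine ⟨Polynomial.C c * ∑ i ∈ Finset.range (d + 1),
        Polynomial.C (_root_.bernoulli i * ((d + 1).choose i) / (d + 1)) * Polynomial.X ^ (d + 1 - i),
        fun N => ?_⟩
      simp only [Polynomial.eval_monomial, Polynomial.eval_mul, Polynomial.eval_C,
        Polynomial.eval_finset_sum, Polynomial.eval_pow, Polynomial.eval_X]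
      rw [← Finset.mul_sum, sum_range_pow N d]
      congr 1
      exact Finset.sum_congr rfl fun i _ => by ring

noncomputable def cnt (v : ℕ) (t : Fin v → ℕ) (n : ℕ) : ℕ :=
  Nat.card {c : Fin v → ℕ // ∑ i, c i * t i = n}

lemma cnt_finite (v : ℕ) (t : Fin v → ℕ) (hpos : ∀ i, 0 < t i) (n : ℕ) :
    Finite {c : Fin v → ℕ // ∑ i, c i * t i = n} := by
  have hb : ∀ (c : {c : Fin v → ℕ // ∑ i, c i * t i = n}) (i : Fin v), c.1 i < n + 1 := by
    intro c i
    have h1 : c.1 i ≤ c.1 i * t i := Nat.le_mul_of_pos_right _ (hpos i)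
    have h2 : c.1 i * t i ≤ n :=
      le_trans (Finset.single_le_sum (f := fun i => c.1 i * t i)
        (fun i _ => Nat.zero_le _) (Finset.mem_univ i)) (le_of_eq c.2)
    omega
  apply Finite.of_injective (fun c : {c : Fin v → ℕ // ∑ i, c i * t i = n} =>
    (fun i => (⟨c.1 i, hb c i⟩ : Fin (n + 1))))
  intro c c' h
  apply Subtype.ext; funext i
  exact congrArg Fin.val (congrFun h i)

lemma cnt_one (t : Fin 1 → ℕ) (ht : 0 < t 0) (n : ℕ) :
    cnt 1 t n = if t 0 ∣ n then 1 else 0 := by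
  unfold cnt
  split_ifs with h
  · haveI : Unique {c : Fin 1 → ℕ // ∑ i, c i * t i = n} := by
      refine ⟨⟨⟨fun _ => n / t 0, ?_⟩⟩, ?_⟩
      · simp [Fin.sum_univ_one, Nat.div_mul_cancel h]
      · rintro ⟨c, hc⟩
        apply Subtype.ext; funext i
        have h0 : c 0 * t 0 = n := by simpa [Fin.sum_univ_one] using hc
        have : c 0 = n / t 0 := by
          rw [← h0, Nat.mul_div_cancel _ ht]
        fin_cases i
        simpa using this
    exact Nat.card_unique
  · haveI : IsEmpty {c : Fin 1 → ℕ // ∑ i, c i * t i = n} := by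
      refine ⟨fun c => h ?_⟩
      have h0 : c.1 0 * t 0 = n := by simpa [Fin.sum_univ_one] using c.2
      exact ⟨c.1 0, (h0.symm.trans (mul_comm _ _))⟩
    exact Nat.card_of_isEmpty

lemma nat_card_sigma {N : ℕ} (A : Fin N → Type*) [hA : ∀ k, Finite (A k)] :
    Nat.card (Σ k, A k) = ∑ k, Nat.card (A k) := by
  letI : ∀ k, Fintype (A k) := fun k => Fintype.ofFinite _
  simp [Nat.card_eq_fintype_card, Fintype.card_sigma]

lemma cnt_succ (v : ℕ) (t : Fin (v + 1) → ℕ) (hpos : ∀ i, 0 < t i) (n : ℕ) :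
    cnt (v + 1) t n = ∑ k ∈ Finset.range (n / t (Fin.last v) + 1),
      cnt v (fun i => t i.castSucc) (n - k * t (Fin.last v)) := by
  set m := t (Fin.last v) with hm
  have hm0 : 0 < m := hpos _
  have key : {c : Fin (v + 1) → ℕ // ∑ i, c i * t i = n} ≃
      Σ k : Fin (n / m + 1), {c : Fin v → ℕ // ∑ i : Fin v, c i * t i.castSucc = n - k.1 * m} := by
    refine Equiv.ofBijective (fun c => ⟨⟨c.1 (Fin.last v), ?_⟩,
      ⟨fun i => c.1 i.castSucc, ?_⟩⟩) ⟨?_, ?_⟩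
    · -- bound on last coordinate
      have hsum : ∑ i : Fin v, c.1 i.castSucc * t i.castSucc + c.1 (Fin.last v) * m = n := by
        have h0 := c.2
        rw [Fin.sum_univ_castSucc] at h0
        simpa only [← hm] using h0
      exact Nat.lt_succ_of_le ((Nat.le_div_iff_mul_le hm0).mpr (by omega))
    · -- remaining sum
      have hsum : ∑ i : Fin v, c.1 i.castSucc * t i.castSucc + c.1 (Fin.last v) * m = n := by
        have h0 := c.2
        rw [Fin.sum_univ_castSucc] at h0
        simpa only [← hm] using h0
      show ∑ i : Fin v, c.1 i.castSucc * t i.castSucc = n - c.1 (Fin.last v) * m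
      omega
    · -- injective
      intro c c' h
      have h2 := congrArg (fun z : (Σ k : Fin (n / m + 1),
        {c : Fin v → ℕ // ∑ i : Fin v, c i * t i.castSucc = n - k.1 * m}) =>
        Fin.snoc (α := fun _ : Fin (v + 1) => ℕ) (z.2.1 : Fin v → ℕ) (z.1.1 : ℕ)) h
      simp only at h2
      apply Subtype.ext
      calc c.1 = Fin.snoc (Fin.init c.1) (c.1 (Fin.last v)) := (Fin.snoc_init_self _).symm
        _ = Fin.snoc (Fin.init c'.1) (c'.1 (Fin.last v)) := h2
        _ = c'.1 := Fin.snoc_init_self _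
    · -- surjective
      rintro ⟨⟨k, hk⟩, ⟨c, hc⟩⟩
      have hkm : k * m ≤ n := by
        have hk' : k ≤ n / m := Nat.lt_succ_iff.mp hk
        calc k * m ≤ (n / m) * m := Nat.mul_le_mul_right m hk'
          _ ≤ n := Nat.div_mul_le_self n m
      have hc' : ∑ i : Fin v, c i * t i.castSucc = n - k * m := hc
      refine ⟨⟨Fin.snoc c k, ?_⟩, ?_⟩
      · rw [Fin.sum_univ_castSucc]
        simp only [Fin.snoc_castSucc, Fin.snoc_last, ← hm]
        omega
      · apply Sigma.subtype_ext
        · exact Fin.ext (by simp)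
        · funext i
          simp
  haveI : ∀ k : Fin (n / m + 1),
      Finite {c : Fin v → ℕ // ∑ i : Fin v, c i * t i.castSucc = n - k.1 * m} :=
    fun k => cnt_finite v (fun i => t i.castSucc) (fun i => hpos _) _
  calc cnt (v + 1) t n
      = Nat.card (Σ k : Fin (n / m + 1),
          {c : Fin v → ℕ // ∑ i : Fin v, c i * t i.castSucc = n - k.1 * m}) := Nat.card_congr key
    _ = ∑ k : Fin (n / m + 1), cnt v (fun i => t i.castSucc) (n - k.1 * m) :=
        nat_card_sigma _
    _ = ∑ k ∈ Finset.range (n / m + 1), cnt v (fun i => t i.castSucc) (n - k * m) := by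
        rw [Finset.sum_range fun k => cnt v (fun i => t i.castSucc) (n - k * m)]

lemma mod_sub_helper (T ρ x n : ℕ) (hT : 0 < T) (hρ : ρ < T) (hn : n % T = ρ)
    (hx : x < T) (hxn : x ≤ n) : (n - x) % T = (ρ + T - x) % T := by
  obtain ⟨s, rfl⟩ : ∃ s, n = T * s + ρ := ⟨n / T, by rw [← hn]; exact (Nat.div_add_mod n T).symm⟩
  rcases le_or_gt x ρ with h | h
  · have e1 : T * s + ρ - x = T * s + (ρ - x) := by omega
    have e2 : ρ + T - x = (ρ - x) + T := by omega
    rw [e1, e2, Nat.mul_add_mod, Nat.add_mod_right]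
  · rcases Nat.eq_zero_or_pos s with rfl | hs0
    · omega
    obtain ⟨s', rfl⟩ : ∃ s', s = s' + 1 := ⟨s - 1, by omega⟩
    have e0 : T * (s' + 1) = T * s' + T := by ring
    have e1 : T * (s' + 1) + ρ - x = T * s' + (T + ρ - x) := by omega
    have e2 : ρ + T - x = T + ρ - x := by omega
    rw [e1, e2, Nat.mul_add_mod]

lemma qp_sum (f : ℕ → ℚ) (m T : ℕ) (hm : 0 < m) (hd : m ∣ T) (hT : 0 < T)
    (hf : ∀ σ, σ < T → ∃ p : Polynomial ℚ, ∀ n : ℕ, n % T = σ → f n = p.eval (n : ℚ))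
    (ρ : ℕ) (hρ : ρ < T) :
    ∃ P : Polynomial ℚ, ∀ n : ℕ, n % T = ρ →
      ∑ k ∈ Finset.range (n / m + 1), f (n - k * m) = P.eval (n : ℚ) := by
  set q := T / m with hq
  have hqm : m * q = T := Nat.mul_div_cancel' hd
  have hq0 : 0 < q := by
    rcases Nat.eq_zero_or_pos q with h | h
    · rw [h, Nat.mul_zero] at hqm; omega
    · exact h
  set c : ℕ → ℕ := fun r => (ρ + T - r * m) % T with hc
  have hcT : ∀ r, c r < T := fun r => Nat.mod_lt _ hT
  choose p hp using fun r : ℕ => hf (c r) (hcT r)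
  have hFa : ∀ r : ℕ, ∃ F : Polynomial ℚ, ∀ N : ℕ,
      ∑ a ∈ Finset.range N, (p r).eval ((c r : ℚ) + T * a) = F.eval (N : ℚ) := by
    intro r
    obtain ⟨F, hF⟩ := faulhaber_poly ((p r).comp
      (Polynomial.C (c r : ℚ) + Polynomial.C (T : ℚ) * Polynomial.X))
    exact ⟨F, fun N => by simpa [Polynomial.eval_comp] using hF N⟩
  choose F hF using hFa
  refine ⟨∑ r ∈ Finset.range q, (F r).comp (Polynomial.C (1 / (T : ℚ)) *
    (Polynomial.X + Polynomial.C ((T : ℚ) - r * m - c r))), fun n hn => ?_⟩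
  set N : ℕ → ℕ := fun r => (n + T - r * m - c r) / T with hN
  have main : ∀ r, r < q →
      (∀ a : ℕ, (r + a * q ≤ n / m ↔ a < N r)) ∧
      (∀ a : ℕ, a < N r → n - (r + (N r - 1 - a) * q) * m = c r + a * T) ∧
      (n + T - r * m - c r = T * N r) ∧ (r * m + c r ≤ n + T) := by
    intro r hr
    have hcr2 : c r < T := hcT r
    have hrmT : r * m + m ≤ T := by
      have h1 : (r + 1) * m ≤ q * m := Nat.mul_le_mul_right m hr
      have h2 : (r + 1) * m = r * m + m := by ring
      have h3 : q * m = T := by rw [mul_comm]; exact hqm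
      omega
    rcases le_or_gt (r * m) n with hle | hgt
    · have hmod : (n - r * m) % T = c r :=
        mod_sub_helper T ρ (r * m) n hT hρ hn (by omega) hle
      set B := (n - r * m) / T with hB
      have hdm : T * B + c r = n - r * m := by rw [← hmod, hB]; exact Nat.div_add_mod _ T
      have heq : n = r * m + T * B + c r := by omega
      have hNr : N r = B + 1 := by
        have e0 : T * (B + 1) = T * B + T := by ring
        have e1 : n + T - r * m - c r = T * (B + 1) := by omega
        show (n + T - r * m - c r) / T = B + 1
        rw [e1, Nat.mul_div_cancel_left _ hT]
      refine ⟨?_, ?_, ?_, by omega⟩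
      · intro a
        rw [Nat.le_div_iff_mul_le hm, hNr]
        have e2 : (r + a * q) * m = r * m + a * T := by
          calc (r + a * q) * m = r * m + a * (m * q) := by ring
            _ = r * m + a * T := by rw [hqm]
        constructor
        · intro h'
          by_contra hcon
          push_neg at hcon
          have h4 : (B + 1) * T ≤ a * T := Nat.mul_le_mul_right T (by omega)
          have e3 : (B + 1) * T = T * B + T := by ring
          omega
        · intro h'
          have h4 : a * T ≤ B * T := Nat.mul_le_mul_right T (by omega)
          have e3 : B * T = T * B := by ring
          omega
      · intro a ha
        rw [hNr] at ha ⊢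
        obtain ⟨b, hb⟩ : ∃ b, B = a + b := ⟨B - a, by omega⟩
        have e5 : B + 1 - 1 - a = b := by omega
        rw [e5]
        have e6 : (r + b * q) * m = r * m + b * T := by
          calc (r + b * q) * m = r * m + b * (m * q) := by ring
            _ = r * m + b * T := by rw [hqm]
        have e7 : T * B = T * a + T * b := by rw [hb]; ring
        have e8 : b * T = T * b := by ring
        have e9 : a * T = T * a := by ring
        omega
      · have e0 : T * (B + 1) = T * B + T := by ring
        rw [hNr]; omega
    · have hnT : n < T := by omega
      have hnρ : n = ρ := by rw [← hn, Nat.mod_eq_of_lt hnT]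
      have hcr : c r = ρ + T - r * m := by
        show (ρ + T - r * m) % T = ρ + T - r * m
        exact Nat.mod_eq_of_lt (by omega)
      have hN0 : N r = 0 := by
        show (n + T - r * m - c r) / T = 0
        have e : n + T - r * m - c r = 0 := by omega
        rw [e, Nat.zero_div]
      refine ⟨?_, ?_, ?_, by omega⟩
      · intro a
        rw [hN0]
        simp only [Nat.not_lt_zero, iff_false, not_le]
        by_contra hcon
        push_neg at hcon
        have h1 : r ≤ n / m := by omega
        have h2 : r * m ≤ (n / m) * m := Nat.mul_le_mul_right m h1
        have h3 : (n / m) * m ≤ n := Nat.div_mul_le_self n m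
        omega
      · intro a ha; rw [hN0] at ha; omega
      · rw [hN0, Nat.mul_zero]; omega
  -- reindex the sum
  have stepA : ∑ k ∈ Finset.range (n / m + 1), f (n - k * m)
      = ∑ z ∈ (Finset.range q).sigma (fun r => Finset.range (N r)),
          f (n - (z.1 + z.2 * q) * m) := by
    refine Finset.sum_bij' (fun k _ => (⟨k % q, k / q⟩ : Σ _ : ℕ, ℕ))
      (fun z _ => z.1 + z.2 * q) ?_ ?_ ?_ ?_ ?_
    · intro k hk
      rw [Finset.mem_range] at hk
      rw [Finset.mem_sigma, Finset.mem_range, Finset.mem_range]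
      refine ⟨Nat.mod_lt _ hq0, ?_⟩
      have h1 := (main (k % q) (Nat.mod_lt _ hq0)).1 (k / q)
      apply h1.mp
      rw [Nat.mod_add_div']
      omega
    · intro z hz
      rw [Finset.mem_sigma, Finset.mem_range, Finset.mem_range] at hz
      rw [Finset.mem_range]
      have h1 := ((main z.1 hz.1).1 z.2).mpr hz.2
      show z.1 + z.2 * q < n / m + 1
      omega
    · intro k _
      exact Nat.mod_add_div' k q
    · intro z hz
      rw [Finset.mem_sigma, Finset.mem_range, Finset.mem_range] at hz
      refine Sigma.ext ?_ (heq_of_eq ?_)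
      · show (z.1 + z.2 * q) % q = z.1
        rw [Nat.add_mul_mod_self_right, Nat.mod_eq_of_lt hz.1]
      · show (z.1 + z.2 * q) / q = z.2
        rw [Nat.add_mul_div_right _ _ hq0, Nat.div_eq_of_lt hz.1, Nat.zero_add]
    · intro k _
      rw [Nat.mod_add_div']
  rw [stepA, Finset.sum_sigma]
  rw [Polynomial.eval_finset_sum]
  refine Finset.sum_congr rfl fun r hr => ?_
  rw [Finset.mem_range] at hr
  obtain ⟨hiff, hval, hnum, hle⟩ := main r hr
  have hrefl := Finset.sum_range_reflect (fun a => f (n - (r + a * q) * m)) (N r)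
  rw [← hrefl]
  have step2 : ∑ a ∈ Finset.range (N r), f (n - (r + (N r - 1 - a) * q) * m)
      = ∑ a ∈ Finset.range (N r), (p r).eval ((c r : ℚ) + T * a) := by
    refine Finset.sum_congr rfl fun a ha => ?_
    rw [Finset.mem_range] at ha
    rw [hval a ha, hp r _ (by rw [Nat.add_mul_mod_self_right, Nat.mod_eq_of_lt (hcT r)])]
    push_cast
    ring_nf
  rw [step2, hF r (N r)]
  rw [Polynomial.eval_comp, Polynomial.eval_mul, Polynomial.eval_add, Polynomial.eval_C,
    Polynomial.eval_C, Polynomial.eval_X]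
  congr 1
  have hcast : (T : ℚ) * (N r : ℚ) = (n : ℚ) + T - r * m - c r := by
    have h1 := hnum
    have h2 : (↑(n + T - r * m - c r) : ℚ) = (↑(T * N r) : ℚ) := by rw [h1]
    have h3 : r * m ≤ n + T := by omega
    have h4 : c r ≤ n + T - r * m := by omega
    push_cast [Nat.cast_sub h4, Nat.cast_sub h3] at h2
    linarith [h2]
  have hT' : (T : ℚ) ≠ 0 := Nat.cast_ne_zero.mpr (by omega)
  field_simp
  linarith [hcast]

lemma main_aux : ∀ v : ℕ, 1 ≤ v → ∀ t : Fin v → ℕ, (∀ i, 0 < t i) →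
    ∀ T : ℕ, 0 < T → (∀ i, t i ∣ T) → ∀ ρ, ρ < T →
    ∃ p : Polynomial ℚ, ∀ n : ℕ, n % T = ρ → (cnt v t n : ℚ) = p.eval (n : ℚ) := by
  intro v
  induction v with
  | zero => omega
  | succ w ih =>
    intro _ t hpos T hT0 hdvd ρ hρ
    rcases Nat.eq_zero_or_pos w with rfl | hw
    · -- base case: one coin
      have ht0 : 0 < t 0 := hpos 0
      have hdvdT : t 0 ∣ T := hdvd 0
      have key : ∀ n : ℕ, n % T = ρ → (t 0 ∣ n ↔ t 0 ∣ ρ) := by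
        intro n hn
        obtain ⟨s, rfl⟩ : ∃ s, n = T * s + ρ :=
          ⟨n / T, by rw [← hn]; exact (Nat.div_add_mod n T).symm⟩
        have h1 : t 0 ∣ T * s := Dvd.dvd.mul_right hdvdT s
        constructor
        · intro h2; exact (Nat.dvd_add_right h1).mp h2
        · intro h2; exact Nat.dvd_add h1 h2
      by_cases hρd : t 0 ∣ ρ
      · refine ⟨1, fun n hn => ?_⟩
        rw [cnt_one t ht0 n, if_pos ((key n hn).mpr hρd)]
        simp
      · refine ⟨0, fun n hn => ?_⟩
        rw [cnt_one t ht0 n, if_neg (fun h => hρd ((key n hn).mp h))]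
        simp
    · -- inductive step
      set m := t (Fin.last w) with hm
      have hm0 : 0 < m := hpos _
      have hmT : m ∣ T := hdvd _
      have hf : ∀ σ, σ < T → ∃ p : Polynomial ℚ, ∀ n : ℕ, n % T = σ →
          ((cnt w (fun i => t i.castSucc) n : ℚ)) = p.eval (n : ℚ) :=
        fun σ hσ => ih hw (fun i => t i.castSucc) (fun i => hpos _) T hT0
          (fun i => hdvd _) σ hσ
      obtain ⟨P, hP⟩ := qp_sum (fun n => (cnt w (fun i => t i.castSucc) n : ℚ))
        m T hm0 hmT hT0 hf ρ hρ
      refine ⟨P, fun n hn => ?_⟩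
      rw [cnt_succ w t hpos n, ← hP n hn]
      push_cast
      rfl

/-- The change function of the coin set `{t₁,…,t_v}` is quasi-polynomial with period
`T = lcm(t₁,…,t_v)`: for every residue `ρ` with `0 ≤ ρ ≤ T − 1` there is a polynomial
`p_ρ ∈ ℚ[X]` such that for all `n ≡ ρ (mod T)`, the number of ways to make change of `n`
equals `p_ρ(n)`. -/
theorem change_function_quasi_polynomial (v : ℕ) (hv : 1 ≤ v) (t : Fin v → ℕ) (hpos : ∀ i, 0 < t i)
    (hmono : StrictMono t) (T : ℕ) (hT : T = Finset.univ.lcm t) :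
    ∀ ρ : ℕ, ρ ≤ T - 1 → ∃ p : Polynomial ℚ, ∀ n : ℕ, n % T = ρ →
      (Nat.card {c : Fin v → ℕ // ∑ i, c i * t i = n} : ℚ) = p.eval (n : ℚ) := by
  intro ρ hρ
  have hT0 : 0 < T := by
    rw [hT]
    rcases Nat.eq_zero_or_pos (Finset.univ.lcm t) with h | h
    · exfalso
      rw [Finset.lcm_eq_zero_iff] at h
      obtain ⟨i, -, hi⟩ := h
      have := hpos i
      omega
    · exact h
  have hρ' : ρ < T := by omega
  obtain ⟨p, hp⟩ := main_aux v hv t hpos T hT0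
    (fun i => hT ▸ Finset.dvd_lcm (Finset.mem_univ i)) ρ hρ'
  exact ⟨p, fun n hn => hp n hn⟩

end ChangeQP
end
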